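/- arXiv:0811.0076 — 10 statements merged into one kernel-verified Lean document; each statement's English description precedes it below -/
import Mathlib

section
/- The polynomial x^24 + x + t divides the additive polynomial L(x)^2 + (t + t^24)·L(x) in F_2(t)[x], where L(x) = x^2048 + t^64·x^512 + t^8·x^16 + t^16·x^8 + x; hence every root of x^24 + x + t lies in an F_2-vector space of dimension at most 12 (the root space of a separable additive polynomial of degree 2^12). -/
/-!
Put `t = x ^ 24 + x`. In characteristic 2 the Frobenius identities
`(a + b) ^ 2 ^ k = a ^ 2 ^ k + b ^ 2 ^ k` reduce both `L(x)` and `t + t ^ 24` to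
`x ^ 576 + x ^ 392 + x ^ 208 + x`, so `x ^ 24 + x + t` divides `L + (t + t ^ 24)` and hence
`M = L ^ 2 + (t + t ^ 24) L = (L + (t + t ^ 24)) L`. Since `M` is additive, its roots in a field
of characteristic 2 form an `𝔽₂`-subspace with at most `deg M = 2 ^ 12` elements, and this subspace
contains every root of `x ^ 24 + x + t`.
-/

open Polynomial

set_option maxRecDepth 30000

theorem card_pow_finrank_le_natDegree {K V : Type*} [Field K] [Fintype K] [CommRing V] [IsDomain V]
    [Module K V] (S : Submodule K V) {f : V[X]} (hf : f ≠ 0) (hS : ∀ x ∈ S, f.IsRoot x) :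
    Fintype.card K ^ Module.finrank K S ≤ f.natDegree := by
  classical
  have : Fintype S := ((finite_setOfPred_isRoot hf).subset hS).fintype
  rw [← Module.card_eq_pow_finrank]
  refine le_trans ?_ (card_le_degree_of_subset_roots (Z := (S : Set V).toFinset) fun x hx => ?_)
  · simp
  · simpa [mem_roots hf] using hS x (by simpa using hx)

section

variable {R : Type*} [CommRing R]

noncomputable def linearizedL (s : R) : R[X] :=
  X ^ 2048 + C (s ^ 64) * X ^ 512 + C (s ^ 8) * X ^ 16 + C (s ^ 16) * X ^ 8 + X

theorem map_linearizedL {S : Type*} [CommRing S] (f : R →+* S) (s : R) :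
    (linearizedL s).map f = linearizedL (f s) := by
  simp only [linearizedL, Polynomial.map_add, Polynomial.map_mul, Polynomial.map_pow, map_C,
    map_X, map_pow]

theorem eval_linearizedL_add [CharP R 2] (s x y : R) :
    (linearizedL s).eval (x + y) = (linearizedL s).eval x + (linearizedL s).eval y := by
  have frobenius (n : ℕ) : (x + y) ^ 2 ^ n = x ^ 2 ^ n + y ^ 2 ^ n := add_pow_char_pow ..
  simp only [linearizedL, eval_add, eval_mul, eval_pow, eval_C, eval_X]
  rw [show 2048 = 2 ^ 11 by norm_num, show 512 = 2 ^ 9 by norm_num, show 16 = 2 ^ 4 by norm_num,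
    show 8 = 2 ^ 3 by norm_num]
  simp only [frobenius]
  ring

theorem eval_linearizedL_pow_add_self [CharP R 2] (a : R) :
    (linearizedL (a ^ 24 + a)).eval a = (a ^ 24 + a) + (a ^ 24 + a) ^ 24 := by
  have frobenius (n : ℕ) : (a ^ 24 + a) ^ 2 ^ n = a ^ (24 * 2 ^ n) + a ^ 2 ^ n := by
    rw [add_pow_char_pow, pow_mul]
  have h8 := frobenius 3
  have h16 := frobenius 4
  have h64 := frobenius 6
  norm_num at h8 h16 h64
  simp only [linearizedL, eval_add, eval_mul, eval_pow, eval_C, eval_X]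
  rw [h8, h16, h64, show (a ^ 24 + a) ^ 24 = (a ^ 24 + a) ^ 16 * (a ^ 24 + a) ^ 8 by ring, h8, h16]
  linear_combination a ^ 2048 * CharTwo.two_eq_zero (R := R)

theorem X_pow_add_X_add_C_dvd_linearizedL_add_C [IsDomain R] [CharP R 2] (s : R) :
    X ^ 24 + X + C s ∣ linearizedL s + C (s + s ^ 24) := by
  set P : R[X] := X ^ 24 + X + C s
  have hdeg : P.degree ≠ 0 := by
    rw [show P.degree = 24 by unfold P; compute_degree!]
    decide
  have := charP_of_injective_ringHom (AdjoinRoot.of.injective_of_degree_ne_zero hdeg) 2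
  have hs : algebraMap R (AdjoinRoot P) s = AdjoinRoot.root P ^ 24 + AdjoinRoot.root P := by
    have h : AdjoinRoot.root P ^ 24 + AdjoinRoot.root P + AdjoinRoot.of P s = 0 := by
      simpa [P] using AdjoinRoot.eval₂_root P
    exact (eq_neg_of_add_eq_zero_right h).trans (CharTwo.neg_eq _)
  rw [← AdjoinRoot.mk_eq_zero, ← AdjoinRoot.aeval_eq, aeval_def, ← eval_map, Polynomial.map_add,
    map_linearizedL, map_C, eval_add, eval_C, map_add, map_pow, hs, eval_linearizedL_pow_add_self]
  exact CharTwo.add_self_eq_zero _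

noncomputable def linearizedM (s : R) : R[X] :=
  linearizedL s ^ 2 + C (s + s ^ 24) * linearizedL s

theorem map_linearizedM {S : Type*} [CommRing S] (f : R →+* S) (s : R) :
    (linearizedM s).map f = linearizedM (f s) := by
  simp only [linearizedM, Polynomial.map_add, Polynomial.map_mul, Polynomial.map_pow, map_C,
    map_linearizedL, map_add, map_pow]

theorem linearizedM_eq_mul (s : R) :
    linearizedM s = (linearizedL s + C (s + s ^ 24)) * linearizedL s := by
  rw [linearizedM, sq, add_mul]

theorem eval_linearizedM_add [CharP R 2] (s x y : R) :
    (linearizedM s).eval (x + y) = (linearizedM s).eval x + (linearizedM s).eval y := by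
  simp only [linearizedM, eval_add, eval_mul, eval_pow, eval_C, eval_linearizedL_add,
    CharTwo.add_sq]
  ring

theorem linearizedM_monic [Nontrivial R] (s : R) : (linearizedM s).Monic := by
  unfold linearizedM linearizedL
  monicity!

theorem natDegree_linearizedM_le (s : R) : (linearizedM s).natDegree ≤ 4096 := by
  unfold linearizedM linearizedL
  compute_degree

noncomputable def linearizedMHom [CharP R 2] (s : R) : R →+ R :=
  AddMonoidHom.mk' (linearizedM s).eval (eval_linearizedM_add s)

end

theorem stmt_3 :
    let t : RatFunc (ZMod 2) := RatFunc.X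
    let L : (RatFunc (ZMod 2))[X] :=
      X ^ 2048 + C (t ^ 64) * X ^ 512 + C (t ^ 8) * X ^ 16 + C (t ^ 16) * X ^ 8 + X
    ((X ^ 24 + X + C t) ∣ (L ^ 2 + C (t + t ^ 24) * L)) ∧
    ∀ (E : Type) [Field E] [Algebra (RatFunc (ZMod 2)) E] [CharP E 2],
      letI := ZMod.algebra E 2
      ∃ S : Submodule (ZMod 2) E, Module.finrank (ZMod 2) S ≤ 12 ∧
        ∀ x : E, aeval x (X ^ 24 + X + C t) = 0 → x ∈ S := by
  intro t L
  have hdvd : X ^ 24 + X + C t ∣ linearizedM t := by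
    rw [linearizedM_eq_mul]
    exact dvd_mul_of_dvd_left (X_pow_add_X_add_C_dvd_linearizedL_add_C t) _
  refine ⟨hdvd, fun E _ _ _ => ?_⟩
  let := ZMod.algebra E 2
  set s := algebraMap (RatFunc (ZMod 2)) E t
  have hM : ∀ x : E, (linearizedM s).eval x = aeval x (linearizedM t) := fun x => by
    rw [aeval_def, ← eval_map, map_linearizedM]
  let S := AddSubgroup.toZModSubmodule 2 (linearizedMHom s).ker
  have mem_S (x : E) : x ∈ S ↔ (linearizedM s).IsRoot x := Iff.rfl
  refine ⟨S, ?_, fun x hx => ?_⟩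
  · have hcard := card_pow_finrank_le_natDegree S (linearizedM_monic s).ne_zero
      fun x => (mem_S x).mp
    rw [ZMod.card] at hcard
    exact (Nat.pow_le_pow_iff_right (by norm_num)).mp (hcard.trans (natDegree_linearizedM_le s))
  · rw [mem_S, IsRoot.def, hM]
    exact aeval_eq_zero_of_dvd_aeval_eq_zero hdvd hx
end

section
/- Neither the alternating group A_24 nor the symmetric group S_24 embeds as a subgroup of GL_12(F_2). -/
open Matrix

/-
A finite group embedding in `GL₁₂(𝔽₂)` has order dividing `|GL₁₂(𝔽₂)|`. The prime `19` divides
`|A₂₄| = 24!/2`, but not `|GL₁₂(𝔽₂)| = ∏_{i<12} 2^i (2^(12-i) - 1)`: the multiplicative order of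
`2` modulo `19` is `18 > 12`. Since `A₂₄ ≤ S₂₄`, an embedding of `S₂₄` would restrict to one of `A₂₄`.
-/

theorem Nat.Prime.dvd_card_alternatingGroup {α : Type*} [Fintype α] [DecidableEq α] {p : ℕ}
    (hp : p.Prime) (hp2 : p ≠ 2) (hpα : p ≤ Fintype.card α) :
    p ∣ Nat.card (alternatingGroup α) := by
  have : Nontrivial α := Fintype.one_lt_card_iff_nontrivial.1 (hp.one_lt.trans_le hpα)
  have hdvd : p ∣ 2 * Nat.card (alternatingGroup α) := by
    rw [two_mul_nat_card_alternatingGroup, Nat.card_perm, Nat.card_eq_fintype_card]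
    exact Nat.dvd_factorial hp.pos hpα
  exact ((Nat.coprime_primes hp Nat.prime_two).2 hp2).dvd_of_dvd_mul_left hdvd

theorem Matrix.not_dvd_card_GL_field {𝔽 : Type*} [Field 𝔽] [Fintype 𝔽] {p n : ℕ} (hp : p.Prime)
    (hpq : ¬ p ∣ Fintype.card 𝔽)
    (hpqk : ∀ k ∈ Finset.Icc 1 n, ¬ p ∣ Fintype.card 𝔽 ^ k - 1) :
    ¬ p ∣ Nat.card (GL (Fin n) 𝔽) := by
  set q := Fintype.card 𝔽
  rw [card_GL_field, hp.prime.dvd_finsetProd_iff]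
  rintro ⟨i, -, hi⟩
  have hfactor : q ^ n - q ^ (i : ℕ) = q ^ (i : ℕ) * (q ^ (n - i) - 1) := by
    rw [Nat.mul_sub_one, ← pow_add, Nat.add_sub_cancel' i.is_lt.le]
  rw [hfactor] at hi
  rcases hp.dvd_mul.1 hi with h | h
  · exact hpq (hp.dvd_of_dvd_pow h)
  · exact hpqk (n - i) (Finset.mem_Icc.2 ⟨by omega, by omega⟩) h

theorem not_injective_of_prime_dvd_card {G H : Type*} [Group G] [Group H] [Finite H] {p : ℕ}
    (hG : p ∣ Nat.card G) (hH : ¬ p ∣ Nat.card H) (f : G →* H) : ¬ Function.Injective f :=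
  fun hf ↦ hH (hG.trans (Subgroup.card_dvd_of_injective f hf))

theorem stmt_4 :
    (¬ ∃ f : alternatingGroup (Fin 24) →* GL (Fin 12) (ZMod 2), Function.Injective f) ∧
    (¬ ∃ f : Equiv.Perm (Fin 24) →* GL (Fin 12) (ZMod 2), Function.Injective f) := by
  have h19 : Nat.Prime 19 := by norm_num
  have hA : 19 ∣ Nat.card (alternatingGroup (Fin 24)) :=
    h19.dvd_card_alternatingGroup (by norm_num) (by simp)
  have hGL : ¬ 19 ∣ Nat.card (GL (Fin 12) (ZMod 2)) :=
    not_dvd_card_GL_field h19 (by simp) (by rw [ZMod.card]; decide)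
  have hNotA : ¬ ∃ f : alternatingGroup (Fin 24) →* GL (Fin 12) (ZMod 2), Function.Injective f :=
    fun ⟨f, hf⟩ ↦ not_injective_of_prime_dvd_card hA hGL f hf
  refine ⟨hNotA, fun ⟨f, hf⟩ ↦ hNotA ⟨f.comp (alternatingGroup _).subtype, ?_⟩⟩
  exact hf.comp Subtype.val_injective
end

section
/- The discriminant with respect to x of the polynomial x^11 + t·x^2 − 1 over F_3(t) equals 1; in particular it is a square in F_3(t), so the Galois group of x^11 + t·x^2 − 1 over F_3(t) is contained in the alternating group A_11. -/
/-!
For a root `x` of `f = X ^ 11 + t X ^ 2 - 1` we have `x f'(x) = 11 x ^ 11 + 2 t x ^ 2 = 9 x ^ 11 + 2 = 2`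
in characteristic `3`. The roots multiply to `1`, so `∏ f'(rₖ) = 2 ^ 11 = -1`; on the other hand
`∏ f'(rₖ) = (-1) ^ 55 δ ^ 2` with `δ` the Vandermonde determinant of the roots, hence `δ ^ 2 = 1`.
Thus `δ = ±1` is fixed by every automorphism, while an automorphism permuting the roots by `e`
sends `δ` to `sign e • δ`; since `2 ≠ 0`, `sign e = 1`.
-/

open Polynomial Finset Matrix

theorem Polynomial.eval_derivative_prod_X_sub_C {R ι : Type*} [CommRing R] [Fintype ι]
    [DecidableEq ι] (r : ι → R) (k : ι) :
    eval (r k) (derivative (∏ i, (X - C (r i)))) = ∏ j ∈ univ.erase k, (r k - r j) := by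
  rw [← Lagrange.nodal, Lagrange.eval_nodal_derivative_eval_node_eq (mem_univ k),
    Lagrange.eval_nodal]

theorem Fin.sum_card_Ioi (n : ℕ) : ∑ i : Fin n, #(Ioi i) = n.choose 2 := by
  simp only [Fin.card_Ioi]
  rw [Fin.sum_univ_eq_sum_range (fun i => n - 1 - i), sum_range_reflect (fun i => i) n,
    Finset.sum_range_id, Nat.choose_two_right]

namespace Matrix

variable {R : Type*} [CommRing R] {n : ℕ}

theorem det_vandermonde_sq (r : Fin n → R) :
    det (vandermonde r) ^ 2 = ∏ i, ∏ j ∈ Ioi i, (r i - r j) ^ 2 := by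
  simp only [det_vandermonde, ← prod_pow]
  exact prod_congr rfl fun i _ => prod_congr rfl fun j _ => by ring

theorem prod_prod_erase_sub_eq_det_vandermonde_sq (r : Fin n → R) :
    ∏ k, ∏ j ∈ univ.erase k, (r k - r j) = (-1) ^ n.choose 2 * det (vandermonde r) ^ 2 := by
  have herase : ∀ k : Fin n, univ.erase k = Iio k ∪ Ioi k := by
    intro k; ext j
    simp only [mem_erase, mem_union, mem_Iio, mem_Ioi, mem_univ, and_true]
    exact lt_or_lt_iff_ne.symm
  have hlower : ∏ k, ∏ j ∈ Iio k, (r k - r j) = det (vandermonde r) := by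
    rw [det_vandermonde]
    exact prod_comm' (by simp)
  have hupper : ∏ k, ∏ j ∈ Ioi k, (r k - r j) = (-1) ^ n.choose 2 * det (vandermonde r) := by
    rw [det_vandermonde, ← Fin.sum_card_Ioi, ← prod_pow_eq_pow_sum, ← prod_mul_distrib]
    refine prod_congr rfl fun k _ => ?_
    rw [← prod_neg]
    exact prod_congr rfl fun j _ => (neg_sub _ _).symm
  calc ∏ k, ∏ j ∈ univ.erase k, (r k - r j)
      = (∏ k, ∏ j ∈ Iio k, (r k - r j)) * ∏ k, ∏ j ∈ Ioi k, (r k - r j) := by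
        rw [← prod_mul_distrib]
        refine prod_congr rfl fun k _ => ?_
        rw [herase, prod_union (disjoint_left.mpr fun j hj hj' =>
          (mem_Iio.mp hj).asymm (mem_Ioi.mp hj'))]
    _ = (-1) ^ n.choose 2 * det (vandermonde r) ^ 2 := by rw [hlower, hupper]; ring

theorem det_vandermonde_comp_perm (r : Fin n → R) (e : Equiv.Perm (Fin n)) :
    det (vandermonde (r ∘ e)) = Equiv.Perm.sign e * det (vandermonde r) :=
  det_permute e (vandermonde r)

end Matrix

theorem Equiv.Perm.sign_eq_one_of_map_det_vandermonde_eq {L : Type*} [CommRing L]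
    [NoZeroDivisors L] {n : ℕ} (φ : L →+* L) (r : Fin n → L) (e : Equiv.Perm (Fin n))
    (hr : ∀ i, φ (r i) = r (e i)) (hfix : φ (det (vandermonde r)) = det (vandermonde r))
    (hdet : det (vandermonde r) ≠ 0) (htwo : (2 : L) ≠ 0) : Equiv.Perm.sign e = 1 := by
  have hmap : φ (det (vandermonde r)) = Equiv.Perm.sign e * det (vandermonde r) := by
    rw [RingHom.map_det, ← det_vandermonde_comp_perm]
    congr 1
    ext i j
    simp [vandermonde, hr]
  rcases Int.units_eq_one_or (Equiv.Perm.sign e) with he | he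
  · exact he
  · rw [hfix, he] at hmap
    push_cast at hmap
    exact absurd (by linear_combination hmap) (mul_ne_zero htwo hdet)

section CharThree

variable {L : Type*} [CommRing L] [CharP L 3]

theorem mul_eval_derivative_trinomial_eq_two {T x : L} (hx : x ^ 11 + T * x ^ 2 - 1 = 0) :
    x * eval x (derivative (X ^ 11 + C T * X ^ 2 - 1 : L[X])) = 2 := by
  have h3 : (3 : L) = 0 := CharP.cast_eq_zero L 3
  simp only [derivative_sub, derivative_add, derivative_X_pow, derivative_C_mul_X_pow,
    derivative_one, eval_sub, eval_add, eval_mul, eval_pow, eval_C, eval_X, eval_zero]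
  push_cast
  linear_combination 2 * hx + 3 * x ^ 11 * h3

theorem det_vandermonde_sq_eq_one_of_prod_X_sub_C_eq {T : L} {r : Fin 11 → L}
    (hr : ∏ i, (X - C (r i)) = X ^ 11 + C T * X ^ 2 - 1) : det (vandermonde r) ^ 2 = 1 := by
  have h3 : (3 : L) = 0 := CharP.cast_eq_zero L 3
  have hroot : ∀ k, r k ^ 11 + T * r k ^ 2 - 1 = 0 := fun k => by
    have h := congrArg (eval (r k)) hr
    rw [← Lagrange.nodal, Lagrange.eval_nodal_at_node (mem_univ k)] at h
    simpa using h.symm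
  have hprod : ∏ k, r k = 1 := by
    have h0 := congrArg (eval 0) hr
    simp only [eval_prod, eval_sub, eval_add, eval_mul, eval_pow, eval_C, eval_X, eval_one,
      zero_sub, prod_neg, card_univ, Fintype.card_fin] at h0
    linear_combination -h0
  have hderiv : ∏ k, eval (r k) (derivative (∏ i, (X - C (r i)))) = -1 := by
    have h := prod_congr rfl fun k (_ : k ∈ univ) =>
      mul_eval_derivative_trinomial_eq_two (hroot k)
    rw [prod_mul_distrib, hprod, one_mul, prod_const, card_univ, Fintype.card_fin] at h
    rw [hr, h]
    linear_combination 683 * h3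
  simp only [eval_derivative_prod_X_sub_C, prod_prod_erase_sub_eq_det_vandermonde_sq] at hderiv
  rw [show Nat.choose 11 2 = 55 from rfl] at hderiv
  linear_combination -hderiv

end CharThree

theorem stmt_8 :
    let K := RatFunc (ZMod 3)
    let f : K[X] := X ^ 11 + C RatFunc.X * X ^ 2 - 1
    let L := f.SplittingField
    ∀ r : Fin 11 → L,
      Polynomial.map (algebraMap K L) f = ∏ i, (X - C (r i)) →
      ((∏ i, ∏ j ∈ Finset.Ioi i, (r i - r j) ^ 2) = 1 ∧
        ∀ (σ : L ≃ₐ[K] L) (e : Equiv.Perm (Fin 11)),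
          (∀ i, σ (r i) = r (e i)) → Equiv.Perm.sign e = 1) := by
  intro K f L r hf
  have : CharP K 3 := charP_of_injective_algebraMap' (ZMod 3) 3
  have : CharP L 3 := charP_of_injective_algebraMap' K 3
  have hr : ∏ i, (X - C (r i)) = X ^ 11 + C (algebraMap K L RatFunc.X) * X ^ 2 - 1 := by
    simp [← hf, f]
  have hdisc : det (vandermonde r) ^ 2 = 1 := det_vandermonde_sq_eq_one_of_prod_X_sub_C_eq hr
  refine ⟨by rwa [← det_vandermonde_sq], fun σ e hσ => ?_⟩
  have htwo : (2 : L) ≠ 0 := fun h2 =>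
    one_ne_zero (by linear_combination CharP.cast_eq_zero L 3 - h2 : (1 : L) = 0)
  rcases sq_eq_one_iff.mp hdisc with hδ | hδ <;>
    exact Equiv.Perm.sign_eq_one_of_map_det_vandermonde_eq σ.toRingHom r e hσ
      (by simp [hδ]) (by simp [hδ]) htwo
end

section
/- If g(x) = f(x) + t where f(x) is a root-series candidate, then under the substitution u = t^8, any power series f over F_2 with f^24 + f + t = 0 satisfies g^2048 + u^8·g^512 + u·g^16 + u^2·g^8 + g + u^256 + u^72 + u^3 = 0, where g = f + t. -/
/-!
In characteristic 2 the relation `f ^ 24 + f + t = 0` gives `g = f + t = f ^ 24` and, by the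
Frobenius, `u = (f ^ 24 + f) ^ 8 = f ^ 192 + f ^ 8`. Substituting these, the left-hand side becomes
a polynomial in `f` with integer coefficients all of which are even, so it vanishes.
-/

open PowerSeries

section

variable {R : Type*} [CommRing R] [CharP R 2]

def rootRelation (g u : R) : R :=
  g ^ 2048 + u ^ 8 * g ^ 512 + u * g ^ 16 + u ^ 2 * g ^ 8 + g + u ^ 256 + u ^ 72 + u ^ 3

theorem rootRelation_pow_twentyFour (a : R) : rootRelation (a ^ 24) (a ^ 192 + a ^ 8) = 0 := by
  generalize hu : a ^ 192 + a ^ 8 = u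
  have frobenius (n : ℕ) : u ^ 2 ^ n = a ^ (192 * 2 ^ n) + a ^ (8 * 2 ^ n) := by
    rw [← hu, add_pow_char_pow, ← pow_mul, ← pow_mul]
  calc rootRelation (a ^ 24) u
      = (a ^ 24) ^ 2048 + u ^ 2 ^ 3 * (a ^ 24) ^ 512 + u ^ 2 ^ 0 * (a ^ 24) ^ 16
        + u ^ 2 ^ 1 * (a ^ 24) ^ 8 + a ^ 24 + u ^ 2 ^ 8 + u ^ 2 ^ 6 * u ^ 2 ^ 3
        + u ^ 2 ^ 1 * u ^ 2 ^ 0 := by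
        rw [rootRelation]; ring
    _ = 2 * (a ^ 49152 + a ^ 13824 + a ^ 12352 + a ^ 2048 + 2 * a ^ 576 + a ^ 392 + a ^ 208
        + a ^ 24) := by
        simp only [frobenius]; ring
    _ = 0 := by rw [CharTwo.two_eq_zero, zero_mul]

end

theorem stmt_9 (f : PowerSeries (ZMod 2))
    (hf : f ^ 24 + f + X = 0) :
    let g := f + X
    let u := (X : PowerSeries (ZMod 2)) ^ 8
    g ^ 2048 + u ^ 8 * g ^ 512 + u * g ^ 16 + u ^ 2 * g ^ 8 + g +
      u ^ 256 + u ^ 72 + u ^ 3 = 0 := by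
  have : CharP (PowerSeries (ZMod 2)) 2 := charP_of_injective_algebraMap' (ZMod 2) 2
  have hX : X = f ^ 24 + f := (CharTwo.add_eq_zero.mp hf).symm
  have hg : f + X = f ^ 24 := by
    rw [hX, add_comm (f ^ 24), CharTwo.add_cancel_left]
  have hu : X ^ 8 = f ^ 192 + f ^ 8 := by
    rw [hX, show 8 = 2 ^ 3 from rfl, add_pow_char_pow, ← pow_mul]; rfl
  change rootRelation (f + X) (X ^ 8) = 0
  rw [hg, hu]
  exact rootRelation_pow_twentyFour f
end

section
/- For each seventh root of unity ε in F_8, the formal power series f_ε = Σ_{i ∈ Ω} ε^{2^{N(i)}} t^i satisfies f_ε^8 + t·f_ε^2 + f_ε = 0 in F_8[[t]], where Ω is the set of nonnegative integers n such that n = 0 or every maximal block of consecutive zeros in the binary expansion of n has length divisible by 3, and N(i) is the number of ones in the binary expansion of i. -/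
/-!
In characteristic 2 the coefficients of `f ^ (2 ^ k)` are those of `f` raised to the power
`2 ^ k` and moved from index `i` to index `2 ^ k * i`. So, writing `c` for the coefficients of
`f_ε`, the equation `f ^ 8 + t f ^ 2 + f = 0` says: `c 0 = c 0 ^ 8`, `c (2j+1) = c j ^ 2`,
`c (8m) = c m ^ 8`, and `c n = 0` for even `n` not divisible by `8`. Since `ε ^ 8 = ε`, every
coefficient satisfies `c ^ 8 = c`, and the rest is bookkeeping on binary expansions: appending
a digit `1` keeps `n` in `Ω` and adds one to `N`, appending three zeros changes neither, and
appending a lone block of one or two zeros leaves `Ω`.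
-/

open PowerSeries
open scoped Classical

/-- `N i` is the number of ones in the binary expansion of `i`. -/
def binOnes (i : ℕ) : ℕ := (Nat.digits 2 i).count 1

/-- `n ∈ Omega` iff `n = 0` or every maximal block of consecutive zeros in the
binary expansion of `n` has length divisible by 3.  (Splitting the digit list on
the digit 1 yields exactly the maximal runs of zeros, possibly empty.) -/
def inOmega (n : ℕ) : Prop := ∀ p ∈ (Nat.digits 2 n).splitOn 1, 3 ∣ p.length

theorem PowerSeries.coeff_pow_expChar_pow {R : Type*} [CommRing R] (p : ℕ) [ExpChar R p]
    (f : R⟦X⟧) (k n : ℕ) :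
    coeff n (f ^ p ^ k) = if p ^ k ∣ n then coeff (n / p ^ k) f ^ p ^ k else 0 := by
  have hp : p ≠ 0 := expChar_ne_zero R p
  rw [← MvPowerSeries.map_iterateFrobenius_expand p hp f k]
  -- `PowerSeries.map` and `PowerSeries.expand` are the `MvPowerSeries` ones in one variable.
  change coeff n (map (iterateFrobenius R p k) (expand (p ^ k) (pow_ne_zero k hp) f)) = _
  rw [coeff_map, coeff_expand]
  split_ifs
  · rfl
  · exact zero_pow (pow_ne_zero k hp)

theorem Nat.digits_two_two_pow_mul_odd (k j : ℕ) :
    Nat.digits 2 (2 ^ k * (2 * j + 1)) = List.replicate k 0 ++ 1 :: Nat.digits 2 j := by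
  rw [Nat.digits_base_pow_mul one_lt_two (by omega), add_comm,
    Nat.digits_add 2 one_lt_two 1 j one_lt_two (by simp)]

theorem inOmega_zero : inOmega 0 := by
  simp [inOmega]

theorem inOmega_two_pow_mul_odd (k j : ℕ) :
    inOmega (2 ^ k * (2 * j + 1)) ↔ 3 ∣ k ∧ inOmega j := by
  rw [inOmega, Nat.digits_two_two_pow_mul_odd,
    List.splitOn_append_cons_self_of_not_mem (by simp), List.forall_mem_cons,
    List.length_replicate, inOmega]

theorem inOmega_two_mul_add_one (j : ℕ) : inOmega (2 * j + 1) ↔ inOmega j := by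
  simpa using inOmega_two_pow_mul_odd 0 j

theorem inOmega_eight_mul (m : ℕ) : inOmega (8 * m) ↔ inOmega m := by
  obtain rfl | hm := eq_or_ne m 0
  · simp
  obtain ⟨k, _, ⟨j, rfl⟩, rfl⟩ := Nat.exists_eq_two_pow_mul_odd hm
  rw [← mul_assoc, show 8 * 2 ^ k = 2 ^ (k + 3) by ring, inOmega_two_pow_mul_odd,
    inOmega_two_pow_mul_odd, Nat.dvd_add_self_right]

theorem not_inOmega_of_even_of_not_eight_dvd {n : ℕ} (h2 : 2 ∣ n) (h8 : ¬ 8 ∣ n) :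
    ¬ inOmega n := by
  have hn : n ≠ 0 := by rintro rfl; exact h8 (dvd_zero 8)
  obtain ⟨k, _, ⟨j, rfl⟩, rfl⟩ := Nat.exists_eq_two_pow_mul_odd hn
  rw [inOmega_two_pow_mul_odd]
  rintro ⟨⟨i, rfl⟩, -⟩
  cases i with
  | zero => omega
  | succ i => exact h8 (Dvd.intro (2 ^ (3 * i) * (2 * j + 1)) (by ring))

theorem binOnes_two_mul_add_one (j : ℕ) : binOnes (2 * j + 1) = binOnes j + 1 := by
  rw [binOnes, binOnes, add_comm, Nat.digits_add 2 one_lt_two 1 j one_lt_two (by simp),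
    List.count_cons_self]

theorem binOnes_two_pow_mul (k m : ℕ) : binOnes (2 ^ k * m) = binOnes m := by
  obtain rfl | hm := Nat.eq_zero_or_pos m
  · simp
  simp [binOnes, Nat.digits_base_pow_mul one_lt_two hm, List.count_replicate]

section OmegaSeries

variable {R : Type*} [CommRing R]

noncomputable def omegaCoeff (ε : R) (i : ℕ) : R := if inOmega i then ε ^ 2 ^ binOnes i else 0

theorem omegaCoeff_zero (ε : R) : omegaCoeff ε 0 = ε := by
  simp [omegaCoeff, inOmega_zero, binOnes]

theorem omegaCoeff_two_mul_add_one (ε : R) (j : ℕ) :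
    omegaCoeff ε (2 * j + 1) = omegaCoeff ε j ^ 2 := by
  simp only [omegaCoeff, inOmega_two_mul_add_one, binOnes_two_mul_add_one]
  split_ifs <;> ring

theorem omegaCoeff_eight_mul (ε : R) (m : ℕ) : omegaCoeff ε (8 * m) = omegaCoeff ε m := by
  rw [omegaCoeff, omegaCoeff, inOmega_eight_mul, show 8 * m = 2 ^ 3 * m by norm_num,
    binOnes_two_pow_mul]

theorem omegaCoeff_of_even_of_not_eight_dvd (ε : R) {n : ℕ} (h2 : 2 ∣ n) (h8 : ¬ 8 ∣ n) :
    omegaCoeff ε n = 0 :=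
  if_neg (not_inOmega_of_even_of_not_eight_dvd h2 h8)

theorem omegaCoeff_pow_eight {ε : R} (hε : ε ^ 8 = ε) (i : ℕ) :
    omegaCoeff ε i ^ 8 = omegaCoeff ε i := by
  unfold omegaCoeff
  split_ifs
  · rw [← pow_mul, mul_comm, pow_mul, hε]
  · exact zero_pow (by norm_num)

theorem omegaSeries_functional_equation [CharP R 2] {ε : R} (hε : ε ^ 8 = ε) :
    mk (omegaCoeff ε) ^ 8 + X * mk (omegaCoeff ε) ^ 2 + mk (omegaCoeff ε) = 0 := by
  have coeff_sq (n : ℕ) :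
      coeff n (mk (omegaCoeff ε) ^ 2) = if 2 ∣ n then omegaCoeff ε (n / 2) ^ 2 else 0 := by
    simpa using coeff_pow_expChar_pow 2 (mk (omegaCoeff ε)) 1 n
  have coeff_pow_eight (n : ℕ) :
      coeff n (mk (omegaCoeff ε) ^ 8) = if 8 ∣ n then omegaCoeff ε (n / 8) else 0 := by
    simpa [omegaCoeff_pow_eight hε] using coeff_pow_expChar_pow 2 (mk (omegaCoeff ε)) 3 n
  ext n
  rw [map_add, map_add, map_zero, coeff_pow_eight, coeff_mk]
  rcases n with _ | n
  · rw [if_pos (dvd_zero 8), coeff_zero_X_mul, add_zero, omegaCoeff_zero,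
      CharTwo.add_self_eq_zero]
  rw [coeff_succ_X_mul, coeff_sq]
  obtain ⟨j, rfl | rfl⟩ := Nat.even_or_odd' n
  · rw [if_neg (by omega), if_pos (dvd_mul_right 2 j), Nat.mul_div_cancel_left j two_pos,
      omegaCoeff_two_mul_add_one, zero_add, CharTwo.add_self_eq_zero]
  rw [if_neg (show ¬ 2 ∣ 2 * j + 1 by omega), add_zero]
  by_cases h8 : 8 ∣ 2 * j + 1 + 1
  · obtain ⟨m, hm⟩ := h8
    rw [hm, if_pos (dvd_mul_right 8 m), Nat.mul_div_cancel_left m (by norm_num),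
      omegaCoeff_eight_mul, CharTwo.add_self_eq_zero]
  · rw [if_neg h8, omegaCoeff_of_even_of_not_eight_dvd ε (by omega) h8, add_zero]

end OmegaSeries

theorem stmt_10 (ε : GaloisField 2 3) (hε : ε ^ 7 = 1) :
    let f : PowerSeries (GaloisField 2 3) :=
      PowerSeries.mk fun i => if inOmega i then ε ^ (2 ^ binOnes i) else 0
    f ^ 8 + X * f ^ 2 + f = 0 :=
  omegaSeries_functional_equation (by rw [pow_succ, hε, one_mul])
end

section
/- The polynomial x^4 + x^2 + t·x over F_2[[t]] has exactly one nonzero solution x ∈ t·F_2[[t]] as a formal power series, and this solution begins t + t^3 + t^5 + t^9 + ⋯. -/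
/-!
The nonzero roots of `x ^ 4 + x ^ 2 + t x = x (x ^ 3 + x + t)` in characteristic `2` are the
roots of `x ^ 3 + x + t`, i.e. the fixed points of `x ↦ t + x ^ 3`. On series without constant
term this map raises the `t`-adic valuation of differences (`a ^ 3 - b ^ 3 = (a - b)(a² + ab + b²)`
with `t ∣ a² + ab + b²`), so it has exactly one fixed point there, the limit of its iterates
from `0`. The same contraction shows that any `p` with `t ^ n ∣ (t + p ^ 3) - p` agrees with the
fixed point modulo `t ^ n`; `p = t + t³ + t⁵ + t⁹` works for `n = 10`.
-/

open PowerSeries Function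

namespace PowerSeries

variable {R : Type*} [CommRing R]

instance {p : ℕ} [CharP R p] : CharP R⟦X⟧ p := charP_of_injective_ringHom C_injective p

theorem eq_of_forall_X_pow_dvd_sub {a b : R⟦X⟧} (h : ∀ n, (X : R⟦X⟧) ^ n ∣ a - b) : a = b := by
  ext n
  simpa [sub_eq_zero] using X_pow_dvd_iff.1 (h (n + 1)) n n.lt_succ_self

structure IsXAdicContraction (F : R⟦X⟧ → R⟦X⟧) : Prop where
  X_dvd : ∀ {a}, X ∣ a → X ∣ F a
  X_pow_succ_dvd : ∀ {n a b}, X ∣ a → X ∣ b → X ^ n ∣ a - b → X ^ (n + 1) ∣ F a - F b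

theorem X_pow_succ_dvd_pow_sub_pow {n k : ℕ} (hk : 2 ≤ k) {a b : R⟦X⟧} (ha : X ∣ a) (hb : X ∣ b)
    (h : X ^ n ∣ a - b) : X ^ (n + 1) ∣ a ^ k - b ^ k := by
  have hsum : X ∣ ∑ i ∈ Finset.range k, a ^ i * b ^ (k - 1 - i) := by
    refine Finset.dvd_sum fun i _ => ?_
    rcases Nat.eq_zero_or_pos i with rfl | hi
    · exact (dvd_pow hb (by omega)).mul_left _
    · exact (dvd_pow ha hi.ne').mul_right _
  rw [← geom_sum₂_mul, pow_succ']
  exact mul_dvd_mul hsum h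

theorem isXAdicContraction_add_pow {c : R⟦X⟧} (hc : X ∣ c) {k : ℕ} (hk : 2 ≤ k) :
    IsXAdicContraction fun a => c + a ^ k where
  X_dvd ha := dvd_add hc (dvd_pow ha (by omega))
  X_pow_succ_dvd ha hb h := by
    simpa using X_pow_succ_dvd_pow_sub_pow hk ha hb h

namespace IsXAdicContraction

variable {F : R⟦X⟧ → R⟦X⟧} (hF : IsXAdicContraction F)
include hF

theorem X_dvd_iterate (k : ℕ) : X ∣ F^[k] 0 := by
  induction k with
  | zero => exact dvd_zero X
  | succ k ih => rw [iterate_succ_apply']; exact hF.X_dvd ih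

theorem X_pow_dvd_iterate_succ_sub (k : ℕ) : X ^ k ∣ F^[k + 1] 0 - F^[k] 0 := by
  induction k with
  | zero => simp
  | succ k ih =>
    simpa only [iterate_succ_apply'] using
      hF.X_pow_succ_dvd (hF.X_dvd_iterate (k + 1)) (hF.X_dvd_iterate k) ih

theorem X_pow_dvd_iterate_sub {k m : ℕ} (h : k ≤ m) : X ^ k ∣ F^[m] 0 - F^[k] 0 := by
  induction m, h using Nat.le_induction with
  | base => simp
  | succ m hkm ih =>
    have h_step := (pow_dvd_pow X hkm).trans (hF.X_pow_dvd_iterate_succ_sub m)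
    simpa using dvd_add h_step ih

theorem exists_isFixedPt : ∃ x, X ∣ x ∧ IsFixedPt F x := by
  set x : R⟦X⟧ := PowerSeries.mk fun n => coeff n (F^[n + 1] 0)
  have hx : ∀ k, X ^ k ∣ x - F^[k] 0 := by
    refine fun k => X_pow_dvd_iff.2 fun m hm => ?_
    have h := X_pow_dvd_iff.1 (hF.X_pow_dvd_iterate_sub hm) m m.lt_succ_self
    rw [map_sub, sub_eq_zero] at h
    simp [x, h]
  have hxX : X ∣ x := (dvd_sub_left (hF.X_dvd_iterate 1)).1 (by simpa using hx 1)
  refine ⟨x, hxX, eq_of_forall_X_pow_dvd_sub fun n => ?_⟩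
  refine (pow_dvd_pow X n.le_succ).trans ?_
  have h_near := hF.X_pow_succ_dvd hxX (hF.X_dvd_iterate n) (hx n)
  rw [← iterate_succ_apply' F n] at h_near
  simpa using dvd_add h_near ((dvd_sub_comm).1 (hx (n + 1)))

theorem X_pow_dvd_sub_of_isFixedPt {x p : R⟦X⟧} (hx : X ∣ x) (hfix : IsFixedPt F x) (hp : X ∣ p)
    {n : ℕ} (h : X ^ n ∣ F p - p) : X ^ n ∣ x - p := by
  suffices ∀ m ≤ n, X ^ m ∣ x - p from this n le_rfl
  intro m hm
  induction m with
  | zero => simp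
  | succ m ih =>
    have h_split : x - p = (F x - F p) + (F p - p) := by rw [hfix]; ring
    rw [h_split]
    exact dvd_add (hF.X_pow_succ_dvd hx hp (ih (by omega))) ((pow_dvd_pow X hm).trans h)

theorem existsUnique_isFixedPt : ∃! x, X ∣ x ∧ IsFixedPt F x := by
  obtain ⟨x, hxX, hx⟩ := hF.exists_isFixedPt
  refine ⟨x, ⟨hxX, hx⟩, fun y ⟨hyX, hy⟩ => (eq_of_forall_X_pow_dvd_sub fun n => ?_).symm⟩
  exact hF.X_pow_dvd_sub_of_isFixedPt hxX hx hyX (by rw [hy.eq, sub_self]; exact dvd_zero _)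

end IsXAdicContraction

theorem pow_four_add_sq_add_X_mul_eq_zero_iff [IsDomain R] [CharP R 2] {y : R⟦X⟧}
    (hy : y ≠ 0) :
    y ^ 4 + y ^ 2 + X * y = 0 ↔ IsFixedPt (fun a => X + a ^ 3) y := by
  have h_factor : y ^ 4 + y ^ 2 + X * y = y * ((X + y ^ 3) - y) := by
    linear_combination y ^ 2 * CharTwo.two_eq_zero (R := R⟦X⟧)
  rw [h_factor, mul_eq_zero, sub_eq_zero, or_iff_right hy]
  rfl

end PowerSeries

theorem stmt_11 :
    ∃ x : PowerSeries (ZMod 2),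
      (x ≠ 0 ∧ constantCoeff x = 0 ∧ x ^ 4 + x ^ 2 + X * x = 0) ∧
      (∀ y : PowerSeries (ZMod 2),
        y ≠ 0 → constantCoeff y = 0 → y ^ 4 + y ^ 2 + X * y = 0 → y = x) ∧
      coeff 1 x = 1 ∧ coeff 3 x = 1 ∧
      coeff 5 x = 1 ∧ coeff 9 x = 1 ∧
      coeff 0 x = 0 ∧ coeff 2 x = 0 ∧
      coeff 4 x = 0 ∧ coeff 6 x = 0 ∧
      coeff 7 x = 0 ∧ coeff 8 x = 0 := by
  have hF : IsXAdicContraction fun a : (ZMod 2)⟦X⟧ => X + a ^ 3 :=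
    isXAdicContraction_add_pow (dvd_refl X) (by norm_num)
  obtain ⟨x, ⟨hxX, hx⟩, hx_unique⟩ := hF.existsUnique_isFixedPt
  set p : (ZMod 2)⟦X⟧ := X + X ^ 3 + X ^ 5 + X ^ 9
  have hp : X + p ^ 3 - p = X ^ 10 * (X + X ^ 3 + X ^ 11 + X ^ 13 + X ^ 17) := by
    simp only [p]
    ring_nf
    -- `reduce_mod_char` only sees numerals of `ZMod 2`, so move them there through `C`
    simp only [← map_ofNat C]
    reduce_mod_char
    simp
  have h_approx : X ^ 10 ∣ x - p :=
    hF.X_pow_dvd_sub_of_isFixedPt hxX hx (X_dvd_iff.2 (by simp [p])) (Dvd.intro _ hp.symm)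
  have hcoeff : ∀ n < 10, coeff n x = coeff n p := fun n hn => by
    simpa [sub_eq_zero] using X_pow_dvd_iff.1 h_approx n hn
  have hx0 : x ≠ 0 := fun h => by simpa [h, p] using hcoeff 1 (by norm_num)
  refine ⟨x, ⟨hx0, X_dvd_iff.1 hxX, (pow_four_add_sq_add_X_mul_eq_zero_iff hx0).2 hx⟩,
    fun y hy hy0 hy_root =>
      hx_unique y ⟨X_dvd_iff.2 hy0, (pow_four_add_sq_add_X_mul_eq_zero_iff hy).1 hy_root⟩, ?_⟩
  refine ⟨?_, ?_, ?_, ?_, ?_, ?_, ?_, ?_, ?_, ?_⟩ <;>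
    rw [hcoeff _ (by norm_num)] <;> simp [p, coeff_X, coeff_X_pow]
end

section
/- Let P_1, P_2, P_4 be three roots of x^7 + t·x + 1 in a splitting field over F_2(t) with P_1 + P_2 + P_4 = 0, and set u = P_1·P_2 + P_2·P_4 + P_4·P_1 and L_0 = P_1·P_2·P_4. Then L_0 satisfies L_0^7 + t^2·L_0^3 + 1 = 0 and u = t·L_0 + L_0^3. -/
/-!
In characteristic 2, three elements summing to zero are the roots of the cubic
`x ^ 3 + u * x + L₀` formed from their elementary symmetric functions. Reducing `x ^ 7 + T * x + 1` modulo this cubic leaves the linear remainder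
`(T + u ^ 3 + L₀ ^ 2) * x + (1 + u ^ 2 * L₀)`, which vanishes at the two distinct roots `P₁`, `P₂`
and hence is zero: `T = u ^ 3 + L₀ ^ 2` and `u ^ 2 * L₀ = 1`. Eliminating `T` gives
`u = T * L₀ + L₀ ^ 3`, and substituting this into `u ^ 2 * L₀ = 1` gives the equation for `L₀`.
-/

theorem eq_zero_and_eq_zero_of_mul_add_eq_zero {R : Type*} [CommRing R] [NoZeroDivisors R]
    {a b x y : R} (hxy : x ≠ y) (hx : a * x + b = 0) (hy : a * y + b = 0) : a = 0 ∧ b = 0 := by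
  have ha : a = 0 := by
    have : a * (x - y) = 0 := by linear_combination hx - hy
    exact (mul_eq_zero.mp this).resolve_right (sub_ne_zero.mpr hxy)
  exact ⟨ha, by simpa [ha] using hx⟩

section CharTwo

variable {R : Type*} [CommRing R] [CharP R 2]

theorem cube_add_mul_add_mul_eq_zero_of_add_add_eq_zero {a b c : R} (h : a + b + c = 0) :
    a ^ 3 + (a * b + b * c + c * a) * a + a * b * c = 0 := by
  linear_combination a ^ 2 * h + a * b * c * CharTwo.two_eq_zero (R := R)

theorem pow_seven_add_mul_add_one_eq_of_cube_add_mul_add_eq_zero {x u v : R} (T : R)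
    (hx : x ^ 3 + u * x + v = 0) :
    x ^ 7 + T * x + 1 = (T + u ^ 3 + v ^ 2) * x + (1 + u ^ 2 * v) := by
  linear_combination (x ^ 4 - u * x ^ 2 - v * x + u ^ 2) * hx +
    (u * v * x ^ 2 - u ^ 3 * x - u ^ 2 * v) * CharTwo.two_eq_zero (R := R)

end CharTwo

theorem stmt_12_general (L : Type) [Field L] [Algebra (RatFunc (ZMod 2)) L]
    (P₁ P₂ P₄ : L)
    (T : L)
    (h1 : P₁ ^ 7 + T * P₁ + 1 = 0) (h2 : P₂ ^ 7 + T * P₂ + 1 = 0)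
    (hne12 : P₁ ≠ P₂)
    (hsum : P₁ + P₂ + P₄ = 0)
    (u L₀ : L) (hu : u = P₁ * P₂ + P₂ * P₄ + P₄ * P₁) (hL : L₀ = P₁ * P₂ * P₄) :
    L₀ ^ 7 + T ^ 2 * L₀ ^ 3 + 1 = 0 ∧ u = T * L₀ + L₀ ^ 3 := by
  have : CharP L 2 := (Algebra.charP_iff (RatFunc (ZMod 2)) L 2).mp inferInstance
  have hcube₁ : P₁ ^ 3 + u * P₁ + L₀ = 0 := by
    subst hu hL; exact cube_add_mul_add_mul_eq_zero_of_add_add_eq_zero hsum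
  have hcube₂ : P₂ ^ 3 + u * P₂ + L₀ = 0 := by
    subst hu hL
    convert cube_add_mul_add_mul_eq_zero_of_add_add_eq_zero (a := P₂) (b := P₄) (c := P₁)
      (by linear_combination hsum) using 2 <;> ring
  obtain ⟨hcoeff, hconst⟩ := eq_zero_and_eq_zero_of_mul_add_eq_zero hne12
    ((pow_seven_add_mul_add_one_eq_of_cube_add_mul_add_eq_zero T hcube₁).symm.trans h1)
    ((pow_seven_add_mul_add_one_eq_of_cube_add_mul_add_eq_zero T hcube₂).symm.trans h2)
  have hu' : u = T * L₀ + L₀ ^ 3 := by linear_combination u * hconst - L₀ * hcoeff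
  refine ⟨?_, hu'⟩
  rw [hu', CharTwo.add_sq] at hconst
  linear_combination hconst

theorem stmt_12 (L : Type) [Field L] [Algebra (RatFunc (ZMod 2)) L]
    (P₁ P₂ P₄ : L)
    (T : L) (hT : T = algebraMap (RatFunc (ZMod 2)) L RatFunc.X)
    (h1 : P₁ ^ 7 + T * P₁ + 1 = 0) (h2 : P₂ ^ 7 + T * P₂ + 1 = 0)
    (h4 : P₄ ^ 7 + T * P₄ + 1 = 0)
    (hne12 : P₁ ≠ P₂) (hne14 : P₁ ≠ P₄) (hne24 : P₂ ≠ P₄)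
    (hsum : P₁ + P₂ + P₄ = 0)
    (u L₀ : L) (hu : u = P₁ * P₂ + P₂ * P₄ + P₄ * P₁) (hL : L₀ = P₁ * P₂ * P₄) :
    L₀ ^ 7 + T ^ 2 * L₀ ^ 3 + 1 = 0 ∧ u = T * L₀ + L₀ ^ 3 :=
  stmt_12_general L P₁ P₂ P₄ T h1 h2 hne12 hsum u L₀ hu hL
end

section
/- With P_1, P_2, P_4 roots of x^7 + t·x + 1 over F_2(t) satisfying P_1 + P_2 + P_4 = 0, define y = P_1^2·P_2 + P_2^2·P_4 + P_4^2·P_1 and y' = P_2^2·P_1 + P_4^2·P_2 + P_1^2·P_4. Then y + y' = P_1·P_2·P_4 and y·y' = t. -/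
/-!
Write `a, b, c` for `P₁, P₂, P₄`. In characteristic 2 they are roots of the cubic
`X³ + e₂ X + e₃` (`e₂ = ab + bc + ca`, `e₃ = abc`, and `e₁ = 0`), and reducing `X⁷` modulo this
cubic gives `X⁷ ≡ (e₂³ + e₃²) X + e₂² e₃`. Hence `(e₂³ + e₃² + T) X + (e₂² e₃ + 1)` vanishes at the
two distinct points `a, b`, so `e₂³ + e₃² = T`. On the other side, the symmetric functions of the
two cyclic sums are `y + y' = -3 e₃` and `y y' = e₂³ + 9 e₃²` whenever `e₁ = 0`.
-/

section CommRing

variable {R : Type*} [CommRing R] {a b c : R}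

theorem cyclic_sum_add_cyclic_sum_of_add_add_eq_zero (h : a + b + c = 0) :
    (a ^ 2 * b + b ^ 2 * c + c ^ 2 * a) + (b ^ 2 * a + c ^ 2 * b + a ^ 2 * c) = -3 * (a * b * c) := by
  linear_combination (a * b + b * c + c * a) * h

theorem cyclic_sum_mul_cyclic_sum_of_add_add_eq_zero (h : a + b + c = 0) :
    (a ^ 2 * b + b ^ 2 * c + c ^ 2 * a) * (b ^ 2 * a + c ^ 2 * b + a ^ 2 * c) =
      (a * b + b * c + c * a) ^ 3 + 9 * (a * b * c) ^ 2 := by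
  obtain rfl : c = -a - b := by linear_combination h
  ring

theorem pow_three_of_add_add_eq_zero (h : a + b + c = 0) :
    a ^ 3 = -(a * b + b * c + c * a) * a + a * b * c := by
  linear_combination a ^ 2 * h

theorem pow_seven_of_pow_three_eq {x p q : R} (hx : x ^ 3 = p * x + q) :
    x ^ 7 = 2 * p * q * x ^ 2 + (p ^ 3 + q ^ 2) * x + p ^ 2 * q := by
  linear_combination (x ^ 4 + p * x ^ 2 + q * x + p ^ 2) * hx

end CommRing

section CharTwo

variable {R : Type*} [CommRing R] [CharP R 2] {a b c : R}

theorem cyclic_sum_add_cyclic_sum_of_add_add_eq_zero_of_charTwo (h : a + b + c = 0) :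
    (a ^ 2 * b + b ^ 2 * c + c ^ 2 * a) + (b ^ 2 * a + c ^ 2 * b + a ^ 2 * c) = a * b * c := by
  linear_combination cyclic_sum_add_cyclic_sum_of_add_add_eq_zero h -
    2 * (a * b * c) * CharTwo.two_eq_zero (R := R)

theorem cyclic_sum_mul_cyclic_sum_of_add_add_eq_zero_of_charTwo (h : a + b + c = 0) :
    (a ^ 2 * b + b ^ 2 * c + c ^ 2 * a) * (b ^ 2 * a + c ^ 2 * b + a ^ 2 * c) =
      (a * b + b * c + c * a) ^ 3 + (a * b * c) ^ 2 := by
  linear_combination cyclic_sum_mul_cyclic_sum_of_add_add_eq_zero h +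
    4 * (a * b * c) ^ 2 * CharTwo.two_eq_zero (R := R)

theorem pow_seven_of_add_add_eq_zero_of_charTwo (h : a + b + c = 0) :
    a ^ 7 = ((a * b + b * c + c * a) ^ 3 + (a * b * c) ^ 2) * a +
      (a * b + b * c + c * a) ^ 2 * (a * b * c) := by
  have hcube : a ^ 3 = (a * b + b * c + c * a) * a + a * b * c := by
    rw [pow_three_of_add_add_eq_zero h, neg_mul, CharTwo.neg_eq]
  linear_combination pow_seven_of_pow_three_eq hcube +
    (a * b + b * c + c * a) * (a * b * c) * a ^ 2 * CharTwo.two_eq_zero (R := R)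

theorem cube_add_sq_elementary_symm_eq_of_roots_of_charTwo [IsDomain R] {t : R}
    (h : a + b + c = 0) (hab : a ≠ b)
    (ha : a ^ 7 + t * a + 1 = 0) (hb : b ^ 7 + t * b + 1 = 0) :
    (a * b + b * c + c * a) ^ 3 + (a * b * c) ^ 2 = t := by
  have ha7 := pow_seven_of_add_add_eq_zero_of_charTwo h
  have hb7 := pow_seven_of_add_add_eq_zero_of_charTwo (show b + a + c = 0 by linear_combination h)
  have hprod : ((a * b + b * c + c * a) ^ 3 + (a * b * c) ^ 2 + t) * (a - b) = 0 := by
    linear_combination ha - hb - ha7 + hb7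
  exact CharTwo.add_eq_zero.mp <| (mul_eq_zero.mp hprod).resolve_right (sub_ne_zero.mpr hab)

end CharTwo

theorem stmt_13_general (L : Type) [Field L] [Algebra (RatFunc (ZMod 2)) L]
    (P₁ P₂ P₄ : L)
    (T : L)
    (h1 : P₁ ^ 7 + T * P₁ + 1 = 0) (h2 : P₂ ^ 7 + T * P₂ + 1 = 0)
    (hne12 : P₁ ≠ P₂)
    (hsum : P₁ + P₂ + P₄ = 0)
    (y y' : L) (hy : y = P₁ ^ 2 * P₂ + P₂ ^ 2 * P₄ + P₄ ^ 2 * P₁)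
    (hy' : y' = P₂ ^ 2 * P₁ + P₄ ^ 2 * P₂ + P₁ ^ 2 * P₄) :
    y + y' = P₁ * P₂ * P₄ ∧ y * y' = T := by
  have : CharP L 2 := charP_of_injective_algebraMap' (RatFunc (ZMod 2)) 2
  subst hy hy'
  refine ⟨cyclic_sum_add_cyclic_sum_of_add_add_eq_zero_of_charTwo hsum, ?_⟩
  rw [cyclic_sum_mul_cyclic_sum_of_add_add_eq_zero_of_charTwo hsum]
  exact cube_add_sq_elementary_symm_eq_of_roots_of_charTwo hsum hne12 h1 h2

theorem stmt_13 (L : Type) [Field L] [Algebra (RatFunc (ZMod 2)) L]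
    (P₁ P₂ P₄ : L)
    (T : L) (hT : T = algebraMap (RatFunc (ZMod 2)) L RatFunc.X)
    (h1 : P₁ ^ 7 + T * P₁ + 1 = 0) (h2 : P₂ ^ 7 + T * P₂ + 1 = 0)
    (h4 : P₄ ^ 7 + T * P₄ + 1 = 0)
    (hne12 : P₁ ≠ P₂) (hne14 : P₁ ≠ P₄) (hne24 : P₂ ≠ P₄)
    (hsum : P₁ + P₂ + P₄ = 0)
    (y y' : L) (hy : y = P₁ ^ 2 * P₂ + P₂ ^ 2 * P₄ + P₄ ^ 2 * P₁)
    (hy' : y' = P₂ ^ 2 * P₁ + P₄ ^ 2 * P₂ + P₁ ^ 2 * P₄) :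
    y + y' = P₁ * P₂ * P₄ ∧ y * y' = T :=
  stmt_13_general L P₁ P₂ P₄ T h1 h2 hne12 hsum y y' hy hy'
end

section
/- Suppose (c_k)_{k≥0} is the sequence in F_3 such that θ = Σ_k c_k ε^{(2k+1)i} t^k is a root of x^11 + t·x^2 − 1 in F_{3^5}[[t]] (with ε a primitive 11th root of unity and c_0 = 1). Then the coefficients satisfy: c_{3j+2} = 0, c_{3j+1} = c_j, and c_{3j} = Σ_{3m+n=j} c_m·c_n (sum over nonnegative integers m, n with 3m + n = j), all identities holding in F_3. -/
open PowerSeries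

/-! Twisting by ε removes it: with g = Σ c_k t^k we have θ = ε^i · g(ε^{2i} t), and since
ε^11 = 1 the equation for θ is the rescaled equation g^11 + t g^2 = 1, already over F_3.
Multiplying by g gives g = (g^3 g)^3 + t g^3, and over F_3 cubing is the substitution t ↦ t^3,
so comparing coefficients of t^(3j+2), t^(3j+1), t^(3j) gives the three identities. -/

namespace PowerSeries

theorem map_frobenius_expand {R : Type*} [CommRing R] (p : ℕ) (hp : p ≠ 0) [ExpChar R p]
    (f : R⟦X⟧) : map (frobenius R p) (expand p hp f) = f ^ p :=
  MvPowerSeries.map_frobenius_expand p hp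

theorem expand_eq_pow_of_zmod (p : ℕ) [Fact p.Prime] (f : (ZMod p)⟦X⟧) :
    expand p (Fact.out : p.Prime).ne_zero f = f ^ p := by
  rw [← map_frobenius_expand, ZMod.frobenius_zmod, map_id]
  rfl

theorem coeff_expand_mul_eq_sum {R : Type*} [CommRing R] (p : ℕ) (hp : p ≠ 0) (f h : R⟦X⟧)
    (j : ℕ) :
    coeff j (expand p hp f * h) = ∑ mn ∈ (Finset.range (j + 1) ×ˢ Finset.range (j + 1)).filter
      (fun mn => p * mn.1 + mn.2 = j), coeff mn.1 f * coeff mn.2 h := by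
  have hdiv (m : ℕ) : p * m / p = m := Nat.mul_div_cancel_left m (Nat.pos_of_ne_zero hp)
  have hle (m : ℕ) : m ≤ p * m := Nat.le_mul_of_pos_left m (Nat.pos_of_ne_zero hp)
  rw [coeff_mul]
  simp_rw [coeff_expand, ite_mul, zero_mul]
  rw [← Finset.sum_filter]
  refine Finset.sum_nbij' (fun a => (a.1 / p, a.2)) (fun mn => (p * mn.1, mn.2)) ?_ ?_ ?_ ?_ ?_
  · rintro ⟨_, b⟩ hab
    simp only [Finset.mem_filter, Finset.HasAntidiagonal.mem_antidiagonal, Finset.mem_product,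
      Finset.mem_range] at hab ⊢
    obtain ⟨rfl, m, rfl⟩ := hab
    have := hle m
    simp only [hdiv, and_true]
    omega
  · rintro ⟨m, b⟩ hmb
    simp only [Finset.mem_filter, Finset.HasAntidiagonal.mem_antidiagonal, Finset.mem_product,
      Finset.mem_range] at hmb ⊢
    exact ⟨hmb.2, dvd_mul_right p m⟩
  · rintro ⟨_, b⟩ hab
    obtain ⟨m, rfl⟩ := (Finset.mem_filter.mp hab).2
    simp [hdiv]
  · rintro ⟨m, b⟩ -
    simp [hdiv]
  · rintro ⟨_, b⟩ hab
    obtain ⟨m, rfl⟩ := (Finset.mem_filter.mp hab).2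
    simp [hdiv]

theorem mk_mul_pow_two_mul_add_one {R S : Type*} [CommSemiring R] [CommSemiring S] (φ : R →+* S)
    (c : ℕ → R) (w : S) :
    mk (fun k => φ (c k) * w ^ (2 * k + 1)) = C w * rescale (w ^ 2) (map φ (mk c)) := by
  ext k
  simp only [coeff_mk, coeff_C_mul, coeff_rescale, coeff_map]
  ring

theorem C_mul_rescale_pow_eleven_add_X_mul_sq_sub_one {S : Type*} [CommRing S] (w : S)
    (hw : w ^ 11 = 1) (f : S⟦X⟧) :
    (C w * rescale (w ^ 2) f) ^ 11 + X * (C w * rescale (w ^ 2) f) ^ 2 - 1 =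
      rescale (w ^ 2) (f ^ 11 + X * f ^ 2 - 1) := by
  have hCw : (C w : S⟦X⟧) ^ 11 = 1 := by rw [← map_pow, hw, map_one]
  simp only [map_add, map_sub, map_mul, map_pow, map_one, rescale_X]
  linear_combination (rescale (w ^ 2) f) ^ 11 * hCw

theorem eq_expand_of_pow_eleven_add_X_mul_sq_sub_one {g : (ZMod 3)⟦X⟧}
    (hg : g ^ 11 + X * g ^ 2 - 1 = 0) :
    g = expand 3 three_ne_zero (expand 3 three_ne_zero g * g) + X * expand 3 three_ne_zero g := by
  rw [expand_eq_pow_of_zmod, expand_eq_pow_of_zmod]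
  linear_combination (-g) * hg

section FunctionalEquation

variable {R : Type*} [CommRing R] {g : R⟦X⟧}

theorem coeff_three_mul_add_two_eq_zero
    (hg : g = expand 3 three_ne_zero (expand 3 three_ne_zero g * g) + X * expand 3 three_ne_zero g)
    (j : ℕ) : coeff (3 * j + 2) g = 0 := by
  conv_lhs => rw [hg]
  rw [map_add, coeff_succ_X_mul, coeff_expand, coeff_expand, if_neg (by omega),
    if_neg (by omega), add_zero]

theorem coeff_three_mul_add_one
    (hg : g = expand 3 three_ne_zero (expand 3 three_ne_zero g * g) + X * expand 3 three_ne_zero g)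
    (j : ℕ) : coeff (3 * j + 1) g = coeff j g := by
  conv_lhs => rw [hg]
  rw [map_add, coeff_succ_X_mul, coeff_expand, coeff_expand, if_neg (by omega),
    if_pos (by omega), zero_add, Nat.mul_div_cancel_left j three_pos]

theorem coeff_three_mul
    (hg : g = expand 3 three_ne_zero (expand 3 three_ne_zero g * g) + X * expand 3 three_ne_zero g)
    (j : ℕ) : coeff (3 * j) g = ∑ mn ∈ (Finset.range (j + 1) ×ˢ Finset.range (j + 1)).filter
      (fun mn => 3 * mn.1 + mn.2 = j), coeff mn.1 g * coeff mn.2 g := by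
  have hX : coeff (3 * j) (X * expand 3 three_ne_zero g) = 0 := by
    rcases j with _ | j
    · exact coeff_zero_X_mul _
    · rw [show 3 * (j + 1) = 3 * j + 2 + 1 by ring, coeff_succ_X_mul, coeff_expand,
        if_neg (by omega)]
  conv_lhs => rw [hg]
  rw [map_add, hX, add_zero, coeff_expand, if_pos (dvd_mul_right 3 j),
    Nat.mul_div_cancel_left j three_pos, coeff_expand_mul_eq_sum]

end FunctionalEquation

end PowerSeries

theorem stmt_17_general (ε : GaloisField 3 5) (hε : orderOf ε = 11) (i : ℕ)
    (c : ℕ → ZMod 3)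
    (θ : PowerSeries (GaloisField 3 5))
    (hθ : θ = PowerSeries.mk fun k =>
      algebraMap (ZMod 3) (GaloisField 3 5) (c k) * ε ^ ((2 * k + 1) * i))
    (hroot : θ ^ 11 + X * θ ^ 2 - 1 = 0) :
    ∀ j : ℕ,
      c (3 * j + 2) = 0 ∧
      c (3 * j + 1) = c j ∧
      c (3 * j) = ∑ mn ∈ (Finset.range (j + 1) ×ˢ Finset.range (j + 1)).filter
          (fun mn => 3 * mn.1 + mn.2 = j), c mn.1 * c mn.2 := by
  set φ := algebraMap (ZMod 3) (GaloisField 3 5)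
  have hw : (ε ^ i) ^ 11 = 1 := by
    rw [← pow_mul, mul_comm, pow_mul, ← hε, pow_orderOf_eq_one, one_pow]
  have hθ_twist : θ = C (ε ^ i) * rescale ((ε ^ i) ^ 2) (map φ (mk c)) := by
    simp_rw [hθ, ← mk_mul_pow_two_mul_add_one, ← pow_mul, mul_comm i]
  have hg : mk c ^ 11 + X * mk c ^ 2 - 1 = 0 := by
    rw [hθ_twist, C_mul_rescale_pow_eleven_add_X_mul_sq_sub_one _ hw] at hroot
    have hw0 : ε ^ i ≠ 0 := fun h => by simp [h] at hw
    refine map_injective φ φ.injective (rescale_injective (pow_ne_zero 2 hw0) ?_)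
    simpa using hroot
  have hfun := eq_expand_of_pow_eleven_add_X_mul_sq_sub_one hg
  intro j
  refine ⟨?_, ?_, ?_⟩
  · simpa using coeff_three_mul_add_two_eq_zero hfun j
  · simpa using coeff_three_mul_add_one hfun j
  · simpa using coeff_three_mul hfun j

theorem stmt_17 (ε : GaloisField 3 5) (hε : orderOf ε = 11) (i : ℕ)
    (c : ℕ → ZMod 3) (hc0 : c 0 = 1)
    (θ : PowerSeries (GaloisField 3 5))
    (hθ : θ = PowerSeries.mk fun k =>
      algebraMap (ZMod 3) (GaloisField 3 5) (c k) * ε ^ ((2 * k + 1) * i))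
    (hroot : θ ^ 11 + X * θ ^ 2 - 1 = 0) :
    ∀ j : ℕ,
      c (3 * j + 2) = 0 ∧
      c (3 * j + 1) = c j ∧
      c (3 * j) = ∑ mn ∈ (Finset.range (j + 1) ×ˢ Finset.range (j + 1)).filter
          (fun mn => 3 * mn.1 + mn.2 = j), c mn.1 * c mn.2 :=
  stmt_17_general ε hε i c θ hθ hroot
end

section
/- The orbit of the 5-element subset {10, 8, 2, 6, 7} of {0,1,...,10} under the group generated by the permutations α = (0 1 2 3 4 5 6 7 8 9 10) and σ = (3 6)(4 0)(5 10)(8 9) has exactly 66 elements, and these 66 five-element subsets form a Steiner system S(4,5,11): every 4-element subset of {0,...,10} is contained in exactly one of them. -/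
/-!
A finite set that contains `x` and is mapped into itself by every generator is invariant under the
generated group (an injective self-map of a finite set is onto), so it contains the orbit of `x`;
conversely, every set reached from `x` by a chain of generator moves lies in the orbit. The list
`steinerBlocks` records a breadth-first search from `B₀`, so the orbit is exactly that list, and
both conditions are finite checks.

Blocks meeting pairwise in fewer than four points share no 4-set, so the 66 blocks cover
`66 · C(5, 4) = 330 = C(11, 4)` distinct 4-sets, that is, all of them.
-/

open Equiv Pointwise MulAction

section Orbit

variable {G X : Type*} [Group G] [MulAction G X]

theorem closure_le_stabilizer_finset [DecidableEq X] {S : Set G} {T : Finset X}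
    (hT : ∀ g ∈ S, ∀ y ∈ T, g • y ∈ T) : Subgroup.closure S ≤ stabilizer G T :=
  (Subgroup.closure_le _).mpr fun g hg =>
    mem_stabilizer_finset_iff_smul_finset_subset.mpr <| by
      intro _ hgy
      obtain ⟨y, hy, rfl⟩ := Finset.mem_smul_finset.mp hgy
      exact hT g hg y hy

theorem orbit_closure_subset_finset [DecidableEq X] {S : Set G} {T : Finset X} {x : X}
    (hx : x ∈ T) (hT : ∀ g ∈ S, ∀ y ∈ T, g • y ∈ T) : orbit (Subgroup.closure S) x ⊆ T := by
  rintro _ ⟨g, rfl⟩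
  rw [← mem_stabilizer_iff.mp (closure_le_stabilizer_finset hT g.2)]
  exact Finset.smul_mem_smul_finset hx

theorem getElem_mem_orbit_closure {S : Finset G} {x : X} {L : List X}
    (hL : ∀ i : Fin L.length, L[i] = x ∨ ∃ j < i, ∃ g ∈ S, L[i] = g • L[j]) (i : Fin L.length) :
    L[i] ∈ orbit (Subgroup.closure (S : Set G)) x := by
  induction i using WellFoundedLT.induction with
  | ind i ih =>
    obtain hx | ⟨j, hji, g, hg, hi⟩ := hL i
    · rw [hx]
      exact mem_orbit_self x
    · rw [hi]
      exact mem_orbit_of_mem_orbit (⟨g, Subgroup.subset_closure hg⟩ : Subgroup.closure (S : Set G))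
        (ih j hji)

theorem orbit_closure_eq_toFinset [DecidableEq X] {S : Finset G} {x : X} {L : List X}
    (hx : x ∈ L) (hL : ∀ i : Fin L.length, L[i] = x ∨ ∃ j < i, ∃ g ∈ S, L[i] = g • L[j])
    (hclosed : ∀ g ∈ S, ∀ y ∈ L, g • y ∈ L) :
    orbit (Subgroup.closure (S : Set G)) x = L.toFinset := by
  refine (orbit_closure_subset_finset (List.mem_toFinset.mpr hx) ?_).antisymm ?_
  · simpa only [Finset.mem_coe, List.mem_toFinset] using hclosed
  · intro y hy
    obtain ⟨i, hi, rfl⟩ := List.mem_iff_getElem.mp (List.mem_toFinset.mp hy)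
    exact getElem_mem_orbit_closure hL ⟨i, hi⟩

end Orbit

section Steiner

variable {α : Type*} [DecidableEq α] {B : Finset (Finset α)} {k t : ℕ}

theorem eq_of_subset_of_card_inter_lt (hB : ∀ s ∈ B, ∀ u ∈ B, s ≠ u → (s ∩ u).card < t)
    {q s u : Finset α} (hs : s ∈ B) (hu : u ∈ B) (hq : q.card = t) (hqs : q ⊆ s) (hqu : q ⊆ u) :
    s = u := by
  by_contra hne
  have := Finset.card_le_card (Finset.subset_inter hqs hqu)
  have := hB s hs u hu hne
  omega

theorem powersetCard_univ_eq_biUnion [Fintype α] (hk : ∀ s ∈ B, s.card = k)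
    (hB : ∀ s ∈ B, ∀ u ∈ B, s ≠ u → (s ∩ u).card < t)
    (hcount : (Fintype.card α).choose t ≤ B.card * k.choose t) :
    Finset.univ.powersetCard t = B.biUnion (Finset.powersetCard t) := by
  have hdisj : (B : Set (Finset α)).PairwiseDisjoint (Finset.powersetCard t) :=
    fun s hs u hu hne => Finset.disjoint_left.mpr fun q hqs hqu => hne <|
      eq_of_subset_of_card_inter_lt hB hs hu (Finset.mem_powersetCard.mp hqs).2
        (Finset.mem_powersetCard.mp hqs).1 (Finset.mem_powersetCard.mp hqu).1
  have hcard : (B.biUnion (Finset.powersetCard t)).card = B.card * k.choose t := by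
    rw [Finset.card_biUnion hdisj, Finset.sum_congr rfl fun s hs => by
      rw [Finset.card_powersetCard, hk s hs], Finset.sum_const, smul_eq_mul]
  refine (Finset.eq_of_subset_of_card_le (fun q hq => ?_) ?_).symm
  · obtain ⟨s, -, hqs⟩ := Finset.mem_biUnion.mp hq
    exact Finset.mem_powersetCard_univ.mpr (Finset.mem_powersetCard.mp hqs).2
  · rwa [hcard, Finset.card_powersetCard, Finset.card_univ]

theorem existsUnique_superset_of_card_inter_lt [Fintype α] (hk : ∀ s ∈ B, s.card = k)
    (hB : ∀ s ∈ B, ∀ u ∈ B, s ≠ u → (s ∩ u).card < t)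
    (hcount : (Fintype.card α).choose t ≤ B.card * k.choose t) {q : Finset α} (hq : q.card = t) :
    ∃! s, s ∈ B ∧ q ⊆ s := by
  have hq' : q ∈ Finset.univ.powersetCard t := Finset.mem_powersetCard_univ.mpr hq
  rw [powersetCard_univ_eq_biUnion hk hB hcount, Finset.mem_biUnion] at hq'
  obtain ⟨s, hs, hqs⟩ := hq'
  exact ⟨s, ⟨hs, (Finset.mem_powersetCard.mp hqs).1⟩, fun u ⟨hu, hqu⟩ =>
    eq_of_subset_of_card_inter_lt hB hu hs hq hqu (Finset.mem_powersetCard.mp hqs).1⟩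

end Steiner

def steinerBlocks : List (Finset (Fin 11)) :=
  [{2, 6, 7, 8, 10}, {0, 3, 7, 8, 9}, {2, 3, 5, 7, 9}, {1, 4, 8, 9, 10}, {4, 6, 7, 8, 9},
   {3, 4, 6, 8, 10}, {0, 2, 5, 9, 10}, {0, 1, 5, 8, 9}, {5, 7, 8, 9, 10}, {0, 4, 5, 7, 9},
   {0, 3, 5, 6, 9}, {0, 1, 3, 6, 10}, {2, 4, 5, 8, 10}, {1, 2, 6, 9, 10}, {0, 6, 8, 9, 10},
   {1, 5, 6, 8, 10}, {0, 4, 7, 8, 10}, {1, 4, 6, 7, 10}, {0, 1, 2, 4, 7}, {1, 3, 4, 5, 6},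
   {0, 2, 3, 7, 10}, {1, 2, 3, 5, 8}, {0, 1, 7, 9, 10}, {3, 4, 5, 8, 9}, {0, 2, 6, 7, 9},
   {1, 3, 5, 9, 10}, {0, 2, 5, 7, 8}, {0, 1, 3, 5, 7}, {2, 4, 5, 6, 7}, {0, 1, 3, 4, 8},
   {2, 3, 4, 6, 9}, {0, 1, 2, 8, 10}, {1, 4, 5, 7, 8}, {4, 5, 6, 9, 10}, {1, 3, 7, 8, 10},
   {2, 3, 4, 7, 8}, {0, 2, 4, 6, 10}, {1, 3, 6, 8, 9}, {2, 4, 7, 9, 10}, {1, 2, 4, 6, 8},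
   {3, 5, 6, 7, 8}, {1, 2, 4, 5, 9}, {0, 1, 4, 6, 9}, {3, 4, 5, 7, 10}, {0, 2, 3, 6, 8},
   {0, 1, 2, 3, 9}, {2, 5, 6, 8, 9}, {0, 5, 6, 7, 10}, {0, 3, 5, 8, 10}, {0, 2, 4, 8, 9},
   {1, 5, 6, 7, 9}, {0, 2, 3, 4, 5}, {3, 6, 7, 9, 10}, {2, 3, 5, 6, 10}, {1, 2, 5, 7, 10},
   {0, 4, 5, 6, 8}, {1, 3, 4, 7, 9}, {1, 2, 3, 4, 10}, {2, 3, 8, 9, 10}, {0, 1, 6, 7, 8},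
   {0, 3, 4, 6, 7}, {0, 3, 4, 9, 10}, {0, 1, 2, 5, 6}, {1, 2, 7, 8, 9}, {0, 1, 4, 5, 10},
   {1, 2, 3, 6, 7}]

def steinerGens : Finset (Perm (Fin 11)) :=
  {finRotate 11, swap 3 6 * swap 4 0 * swap 5 10 * swap 8 9}

theorem steinerBlocks_generated (i : Fin steinerBlocks.length) :
    steinerBlocks[i] = {10, 8, 2, 6, 7} ∨
      ∃ j < i, ∃ g ∈ steinerGens, steinerBlocks[i] = g • steinerBlocks[j] := by
  revert i
  decide +kernel

-- Quantifiers are moved to list indices (and the generators enumerated) before `decide`: over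
-- `s ∈ steinerBlocks` it would otherwise enumerate the `Fintype` of all `Finset (Fin 11)`.
theorem smul_mem_steinerBlocks :
    ∀ g ∈ steinerGens, ∀ s ∈ steinerBlocks, g • s ∈ steinerBlocks := by
  simp only [steinerGens, Finset.forall_mem_insert, Finset.mem_singleton, forall_eq,
    List.forall_mem_iff_getElem]
  decide +kernel

theorem card_toFinset_steinerBlocks : steinerBlocks.toFinset.card = 66 := by
  decide +kernel

theorem card_of_mem_steinerBlocks : ∀ s ∈ steinerBlocks, s.card = 5 := by
  simp only [List.forall_mem_iff_getElem]
  decide +kernel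

theorem card_inter_lt_of_mem_steinerBlocks :
    ∀ s ∈ steinerBlocks, ∀ u ∈ steinerBlocks, s ≠ u → (s ∩ u).card < 4 := by
  simp only [List.forall_mem_iff_getElem]
  decide +kernel

theorem stmt_19 :
    let α : Equiv.Perm (Fin 11) := finRotate 11
    let σ : Equiv.Perm (Fin 11) :=
      Equiv.swap 3 6 * Equiv.swap 4 0 * Equiv.swap 5 10 * Equiv.swap 8 9
    let H : Subgroup (Equiv.Perm (Fin 11)) := Subgroup.closure {α, σ}
    let B₀ : Finset (Fin 11) := {10, 8, 2, 6, 7}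
    let O : Set (Finset (Fin 11)) :=
      {s | ∃ g ∈ H, s = B₀.image (g : Fin 11 → Fin 11)}
    O.ncard = 66 ∧
    ∀ q : Finset (Fin 11), q.card = 4 → ∃! s, s ∈ O ∧ q ⊆ s := by
  intro α σ H B₀ O
  have hO : O = orbit H B₀ := by
    ext s
    simp only [O, Set.mem_ofPred_eq, mem_orbit_iff, Subtype.exists, Subgroup.mk_smul, eq_comm,
      exists_prop, ← Finset.image_smul, Perm.smul_def]
  have hH : H = Subgroup.closure steinerGens := by rw [steinerGens, Finset.coe_pair]
  have horbit : orbit H B₀ = steinerBlocks.toFinset := by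
    rw [hH]
    exact orbit_closure_eq_toFinset (by decide +kernel) steinerBlocks_generated
      smul_mem_steinerBlocks
  rw [hO, horbit, Set.ncard_coe_finset]
  refine ⟨card_toFinset_steinerBlocks, fun q hq => ?_⟩
  simpa only [Finset.mem_coe] using
    existsUnique_superset_of_card_inter_lt
      (by simpa only [List.mem_toFinset] using card_of_mem_steinerBlocks)
      (by simpa only [List.mem_toFinset] using card_inter_lt_of_mem_steinerBlocks)
      (by rw [card_toFinset_steinerBlocks]; decide) hq
end
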